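/- Let S be a semigroup and let T be a subsemigroup of S of finite Rees index, i.e., the complement S \ T is finite. Then T is a Markov semigroup if and only if S is a Markov semigroup. -/

import Mathlib

open Function

/-- A language is regular if it is accepted by a deterministic finite automaton
with a finite state set. -/
def RegularLang {A : Type} (L : Language A) : Prop :=
  ∃ (Q : Type) (_ : Fintype Q) (M : DFA A Q), M.accepts = L

/-- The product of a nonempty word under the letter-assignment `φ`; the empty
word is sent to `none`. This is the induced map `φ⁺` on nonempty words. -/
def prodPlus {A S : Type} [Semigroup S] (φ : A → S) : List A → Option S
  | [] => none
  | a :: w => some (w.foldl (fun s b => s * φ b) (φ a))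

/-- The induced monoid homomorphism `φ*` from the free monoid of words. -/
def monProd {A M : Type} [Monoid M] (φ : A → M) (w : List A) : M :=
  (w.map φ).prod

/-- A semigroup Markov language for `S` over `A` (with respect to `φ`): a regular,
`+`-prefix-closed language of nonempty words mapping bijectively onto `S` under `φ⁺`. -/
structure IsSgMarkovLang {A S : Type} [Semigroup S] (φ : A → S) (L : Language A) : Prop where
  regular : RegularLang L
  not_empty_mem : [] ∉ L
  plus_prefix_closed : ∀ u v : List A, u ≠ [] → v ≠ [] → u ++ v ∈ L → u ∈ L
  unique_rep : ∀ s : S, ∃! w : List A, w ∈ L ∧ prodPlus φ w = some s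

/-- A robust semigroup Markov language: additionally every word of `L` has minimal
length among (nonempty) words representing the same element. -/
structure IsRobustSgMarkovLang {A S : Type} [Semigroup S] (φ : A → S) (L : Language A)
    extends IsSgMarkovLang φ L : Prop where
  min_length : ∀ w ∈ L, ∀ v : List A, prodPlus φ v = prodPlus φ w → w.length ≤ v.length

/-- A monoid Markov language for `M` over `A` (with respect to `φ`): a regular,
prefix-closed language mapping bijectively onto `M` under `φ*`. -/
structure IsMonMarkovLang {A M : Type} [Monoid M] (φ : A → M) (L : Language A) : Prop where
  regular : RegularLang L
  prefix_closed : ∀ u v : List A, u ++ v ∈ L → u ∈ L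
  unique_rep : ∀ m : M, ∃! w : List A, w ∈ L ∧ monProd φ w = m

/-- A robust monoid Markov language: additionally every word of `L` has minimal
length among words representing the same element. -/
structure IsRobustMonMarkovLang {A M : Type} [Monoid M] (φ : A → M) (L : Language A)
    extends IsMonMarkovLang φ L : Prop where
  min_length : ∀ w ∈ L, ∀ v : List A, monProd φ v = monProd φ w → w.length ≤ v.length

/-- `S` is Markov as a semigroup. -/
def SgMarkov (S : Type) [Semigroup S] : Prop :=
  ∃ (A : Type) (_ : Fintype A) (φ : A → S),
    (∀ s : S, ∃ w : List A, prodPlus φ w = some s) ∧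
    ∃ L : Language A, IsSgMarkovLang φ L

/-- `S` is robustly Markov (as a semigroup) with respect to some alphabet. -/
def SgRobustlyMarkov (S : Type) [Semigroup S] : Prop :=
  ∃ (A : Type) (_ : Fintype A) (φ : A → S),
    (∀ s : S, ∃ w : List A, prodPlus φ w = some s) ∧
    ∃ L : Language A, IsRobustSgMarkovLang φ L

/-- `S` is strongly Markov (as a semigroup). -/
def SgStronglyMarkov (S : Type) [Semigroup S] : Prop :=
  ∀ (A : Type) [Fintype A] (φ : A → S),
    (∀ s : S, ∃ w : List A, prodPlus φ w = some s) →
    ∃ L : Language A, IsRobustSgMarkovLang φ L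

/-- `M` is Markov as a monoid. -/
def MonMarkov (M : Type) [Monoid M] : Prop :=
  ∃ (A : Type) (_ : Fintype A) (φ : A → M),
    Surjective (monProd φ) ∧ ∃ L : Language A, IsMonMarkovLang φ L

/-- `M` is robustly Markov (as a monoid) with respect to some alphabet. -/
def MonRobustlyMarkov (M : Type) [Monoid M] : Prop :=
  ∃ (A : Type) (_ : Fintype A) (φ : A → M),
    Surjective (monProd φ) ∧ ∃ L : Language A, IsRobustMonMarkovLang φ L

/-- `M` is strongly Markov (as a monoid). -/
def MonStronglyMarkov (M : Type) [Monoid M] : Prop :=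
  ∀ (A : Type) [Fintype A] (φ : A → M),
    Surjective (monProd φ) →
    ∃ L : Language A, IsRobustMonMarkovLang φ L

/-!
If `T` is Markov over `A`, then `S` is Markov over `A ⊕ (S ∖ T)`: keep the language of `T` and
add one single-letter word for each element outside `T`.

Conversely, let `L` be a Markov language for `S` and compute values in `WithOne S`, where `T`
becomes a subsemigroup `U` with finite complement and `1 ∉ U`. A word of `L` with value in `U` is
cut greedily into shortest nonempty blocks with value in `U` for as long as the rest still has
value in `U`; the rest is the last block. Since prefixes of a word of `L` have pairwise distinct
values, and a DFA for `L` cannot be pumped without changing values, all blocks have bounded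
length. They form a finite alphabet for `T`, over which the block decompositions of the words of
`L` form a Markov language.
-/

namespace Language

variable {α β : Type*}

def lastLetterLang (P Q : α → Prop) : Language α :=
  {w | ∃ u a, w = u ++ [a] ∧ (∀ x ∈ u, P x) ∧ Q a}

variable {P Q : α → Prop}

theorem nil_notMem_lastLetterLang : [] ∉ lastLetterLang P Q := by
  rintro ⟨u, a, h, -⟩
  simp at h

theorem append_singleton_mem_lastLetterLang {w : List α} {a : α} :
    w ++ [a] ∈ lastLetterLang P Q ↔ (∀ x ∈ w, P x) ∧ Q a := by
  constructor
  · rintro ⟨u, b, h, hu, hb⟩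
    obtain ⟨rfl, hab⟩ := List.append_inj' h rfl
    obtain rfl := List.singleton_inj.1 hab
    exact ⟨hu, hb⟩
  · rintro ⟨hw, ha⟩
    exact ⟨w, a, rfl, hw, ha⟩

theorem cons_mem_lastLetterLang {a : α} {w : List α} :
    a :: w ∈ lastLetterLang P Q ↔ (w = [] ∧ Q a) ∨ (P a ∧ w ∈ lastLetterLang P Q) := by
  rcases List.eq_nil_or_concat' w with rfl | ⟨w, b, rfl⟩
  · simpa [nil_notMem_lastLetterLang] using
      append_singleton_mem_lastLetterLang (P := P) (Q := Q) (w := []) (a := a)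
  · rw [← List.cons_append, append_singleton_mem_lastLetterLang,
      append_singleton_mem_lastLetterLang]
    simp [and_assoc]

theorem mem_lastLetterLang_of_append (hPQ : ∀ a, P a → Q a) {u v : List α}
    (h : u ++ v ∈ lastLetterLang P Q) (hu : u ≠ []) : u ∈ lastLetterLang P Q := by
  obtain ⟨u, a, rfl⟩ := (List.eq_nil_or_concat' u).resolve_left hu
  rcases List.eq_nil_or_concat' v with rfl | ⟨v, b, rfl⟩
  · simpa using h
  rw [← List.append_assoc, append_singleton_mem_lastLetterLang] at h
  rw [append_singleton_mem_lastLetterLang]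
  exact ⟨fun x hx => h.1 x (by simp [hx]), hPQ a (h.1 a (by simp))⟩

theorem isRegular_lastLetterLang (P Q : α → Prop) : (lastLetterLang P Q).IsRegular := by
  let M : DFA α (Prop × Prop) := ⟨fun s a => (s.1 ∧ P a, s.1 ∧ Q a), (True, False), {s | s.2}⟩
  have hM : ∀ w, M.eval w = ((∀ x ∈ w, P x), w ∈ lastLetterLang P Q) := by
    intro w
    induction w using List.reverseRecOn with
    | nil => simp [M, DFA.eval, DFA.evalFrom, nil_notMem_lastLetterLang]
    | append_singleton w a ih =>
      rw [DFA.eval_append_singleton, ih, append_singleton_mem_lastLetterLang]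
      simp [M, or_imp, forall_and]
  refine ⟨Prop × Prop, inferInstance, M, Set.ext fun w => ?_⟩
  change M.eval w ∈ {s | s.2} ↔ _
  simp only [hM]
  rfl

theorem IsRegular.preimage_map {L : Language α} (h : L.IsRegular) (f : β → α) :
    IsRegular (List.map f ⁻¹' L : Language β) := by
  obtain ⟨σ, _, M, rfl⟩ := h
  exact ⟨σ, inferInstance, M.comap f, M.accepts_comap f⟩

theorem IsRegular.preimage_flatten {L : Language α} (h : L.IsRegular) :
    IsRegular ({vs | vs.flatten ∈ L} : Language (List α)) := by
  obtain ⟨σ, _, M, rfl⟩ := h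
  let N : DFA (List α) σ := ⟨M.evalFrom, M.start, M.accept⟩
  have hN : ∀ q vs, N.evalFrom q vs = M.evalFrom q vs.flatten := by
    intro q vs
    induction vs generalizing q with
    | nil => rfl
    | cons x vs ih => simp [DFA.evalFrom_cons, ih, N, DFA.evalFrom_of_append]
  refine ⟨σ, inferInstance, N, Set.ext fun vs => ?_⟩
  change N.evalFrom M.start vs ∈ M.accept ↔ M.evalFrom M.start vs.flatten ∈ M.accept
  rw [hN]

end Language

section Words

variable {A B S S' : Type} [Semigroup S] [Semigroup S']

theorem monProd_append {M : Type} [Monoid M] (π : A → M) (u v : List A) :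
    monProd π (u ++ v) = monProd π u * monProd π v := by
  simp [monProd]

theorem monProd_flatten {M : Type} [Monoid M] (π : A → M) (vs : List (List A)) :
    monProd π vs.flatten = monProd (monProd π) vs := by
  simp only [monProd, List.map_flatten, List.prod_flatten, List.map_map]
  rfl

theorem prodPlus_eq_monProd (φ : A → S) (w : List A) :
    prodPlus φ w = monProd (fun a => (φ a : WithOne S)) w := by
  have key : ∀ (x : S) (w : List A), ((w.foldl (fun s b => s * φ b) x : S) : WithOne S) =
      x * monProd (fun a => (φ a : WithOne S)) w := by
    intro x w
    induction w generalizing x with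
    | nil => simp [monProd]
    | cons b w ih => simp [monProd, ih, mul_assoc]
  cases w with
  | nil => rfl
  | cons a w =>
    change (((w.foldl (fun s b => s * φ b) (φ a) : S) : WithOne S)) = _
    rw [key]
    simp [monProd]

theorem prodPlus_eq_none_iff {φ : A → S} {w : List A} : prodPlus φ w = none ↔ w = [] := by
  cases w <;> simp [prodPlus]

theorem prodPlus_map (φ : A → S) (f : B → A) (w : List B) :
    prodPlus φ (w.map f) = prodPlus (φ ∘ f) w := by
  cases w <;> simp [prodPlus, List.foldl_map]

theorem prodPlus_comp (f : S →ₙ* S') (φ : A → S) (w : List A) :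
    prodPlus (f ∘ φ) w = (prodPlus φ w).map f := by
  cases w with
  | nil => rfl
  | cons a w =>
    simp only [prodPlus, Function.comp_apply, Option.map_some, Option.some.injEq]
    exact List.foldl_hom f fun x y => (map_mul f x (φ y)).symm

variable {φ : A → S} {L : Language A}

theorem IsSgMarkovLang.injOn (hL : IsSgMarkovLang φ L) : Set.InjOn (prodPlus φ) L := by
  intro u hu v hv huv
  have hu' : prodPlus φ u ≠ none := fun h => hL.not_empty_mem (prodPlus_eq_none_iff.1 h ▸ hu)
  obtain ⟨s, hs⟩ := Option.ne_none_iff_exists'.1 hu'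
  exact (hL.unique_rep s).unique ⟨hu, hs⟩ ⟨hv, huv ▸ hs⟩

theorem IsSgMarkovLang.of_injOn (hreg : RegularLang L) (hnil : [] ∉ L)
    (hpre : ∀ u v : List A, u ≠ [] → v ≠ [] → u ++ v ∈ L → u ∈ L)
    (hinj : Set.InjOn (prodPlus φ) L) (hsurj : ∀ s, ∃ w ∈ L, prodPlus φ w = some s) :
    IsSgMarkovLang φ L where
  regular := hreg
  not_empty_mem := hnil
  plus_prefix_closed := hpre
  unique_rep s :=
    let ⟨w, hw, hws⟩ := hsurj s
    ⟨w, ⟨hw, hws⟩, fun _ hv => hinj hv.1 hw (hv.2.trans hws.symm)⟩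

theorem IsSgMarkovLang.sgMarkov [Fintype A] (hL : IsSgMarkovLang φ L) : SgMarkov S :=
  ⟨A, inferInstance, φ, fun s => (hL.unique_rep s).exists.imp fun _ h => h.2, L, hL⟩

end Words

section Extension

variable {A B : Type} {L : Language A}

def sumLang (L : Language A) : Language (A ⊕ B) :=
  {w | (∃ u ∈ L, u.map Sum.inl = w) ∨ ∃ b, w = [Sum.inr b]}

theorem nil_notMem_sumLang (hnil : [] ∉ L) : [] ∉ (sumLang L : Language (A ⊕ B)) := by
  rintro (⟨u, hu, h⟩ | ⟨b, h⟩)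
  · exact hnil (List.map_eq_nil_iff.1 h ▸ hu)
  · exact List.cons_ne_nil _ _ h.symm

theorem mem_sumLang_of_append (hL : ∀ u v : List A, u ≠ [] → v ≠ [] → u ++ v ∈ L → u ∈ L)
    {u v : List (A ⊕ B)} (hu : u ≠ []) (hv : v ≠ []) (h : u ++ v ∈ sumLang L) :
    u ∈ sumLang L := by
  rcases h with ⟨w, hw, huv⟩ | ⟨b, huv⟩
  · obtain ⟨u', v', rfl, rfl, rfl⟩ := List.map_eq_append_iff.1 huv
    exact Or.inl ⟨u', hL u' v' (by simpa using hu) (by simpa using hv) hw, rfl⟩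
  · rcases List.append_eq_singleton_iff.1 huv with ⟨rfl, -⟩ | ⟨-, rfl⟩ <;> contradiction

theorem isRegular_sumLang (hL : L.IsRegular) (hnil : [] ∉ L) :
    (sumLang L : Language (A ⊕ B)).IsRegular := by
  let h : A ⊕ B → List A := Sum.elim (fun a => [a]) fun _ => []
  have hflat : ∀ u : List A, ((u.map Sum.inl).map h).flatten = u := by
    intro u
    induction u <;> simp_all [h]
  have hleft : ∀ w : List (A ⊕ B), (∀ x ∈ w, x.isLeft) → ∃ u : List A, u.map Sum.inl = w := by
    intro w hw
    induction w with
    | nil => exact ⟨[], rfl⟩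
    | cons x w ih =>
      obtain ⟨u, rfl⟩ := ih fun y hy => hw y (by simp [hy])
      obtain ⟨a, rfl⟩ := Sum.isLeft_iff.1 (hw x (by simp))
      exact ⟨a :: u, rfl⟩
  convert ((hL.preimage_flatten.preimage_map h).inf
    (Language.isRegular_lastLetterLang (fun x : A ⊕ B => x.isLeft) fun x => x.isLeft)).add
    (Language.isRegular_lastLetterLang (fun _ => False) fun x : A ⊕ B => x.isRight)
  ext w
  rw [Language.mem_add]
  change _ ↔ ((w.map h).flatten ∈ L ∧ _) ∨ _
  refine or_congr ⟨?_, ?_⟩ ⟨?_, ?_⟩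
  · rintro ⟨u, hu, rfl⟩
    obtain ⟨u, a, rfl⟩ := (List.eq_nil_or_concat' u).resolve_left fun h => hnil (h ▸ hu)
    refine ⟨show _ ∈ L by rwa [hflat], ?_⟩
    rw [List.map_append, List.map_singleton]
    exact Language.append_singleton_mem_lastLetterLang.2 ⟨by simp, rfl⟩
  · rintro ⟨hw, u, a, rfl, hu, ha⟩
    obtain ⟨v, hv⟩ := hleft (u ++ [a]) fun x hx => by
      rcases List.mem_append.1 hx with hx | hx
      exacts [hu x hx, List.eq_of_mem_singleton hx ▸ ha]
    refine ⟨v, ?_, hv⟩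
    rw [← hflat v, hv]
    exact hw
  · rintro ⟨b, rfl⟩
    exact Language.append_singleton_mem_lastLetterLang (w := []).2 ⟨by simp, rfl⟩
  · rintro ⟨u, a, rfl, hu, ha⟩
    obtain rfl : u = [] := List.eq_nil_iff_forall_not_mem.2 hu
    obtain ⟨b, rfl⟩ := Sum.isRight_iff.1 ha
    exact ⟨b, rfl⟩

theorem SgMarkov.of_subsemigroup_of_finite_compl {S : Type} [Semigroup S] (T : Subsemigroup S)
    (hfin : ((T : Set S)ᶜ).Finite) (h : SgMarkov T) : SgMarkov S := by
  obtain ⟨A, _, ψ, -, LT, hLT⟩ := h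
  have := hfin.fintype
  let φ : A ⊕ ↥((T : Set S)ᶜ) → S := Sum.elim (fun a => ψ a) Subtype.val
  have hφ : ∀ u, prodPlus φ (u.map Sum.inl) = (prodPlus ψ u).map Subtype.val := fun u => by
    rw [prodPlus_map]
    exact prodPlus_comp (MulMemClass.subtype T) ψ u
  have hφT : ∀ (u : List A) (s : S), prodPlus φ (u.map Sum.inl) = some s → s ∈ T := by
    intro u s hs
    rw [hφ, Option.map_eq_some_iff] at hs
    obtain ⟨t, -, rfl⟩ := hs
    exact t.2
  refine (IsSgMarkovLang.of_injOn (φ := φ) (L := sumLang LT)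
    (isRegular_sumLang hLT.regular hLT.not_empty_mem) (nil_notMem_sumLang hLT.not_empty_mem)
    (fun _ _ => mem_sumLang_of_append hLT.plus_prefix_closed) ?_ fun s => ?_).sgMarkov
  · rintro _ (⟨u, hu, rfl⟩ | ⟨b, rfl⟩) _ (⟨u', hu', rfl⟩ | ⟨b', rfl⟩) h
    · rw [hφ, hφ] at h
      rw [hLT.injOn hu hu' (Option.map_injective Subtype.val_injective h)]
    · exact absurd (hφT u _ h) b'.2
    · exact absurd (hφT u' _ h.symm) b.2
    · simp_all [prodPlus, φ, Subtype.ext_iff]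
  · by_cases hs : s ∈ T
    · obtain ⟨u, ⟨hu, hus⟩, -⟩ := hLT.unique_rep ⟨s, hs⟩
      exact ⟨u.map Sum.inl, Or.inl ⟨u, hu, rfl⟩, by rw [hφ, hus]; rfl⟩
    · exact ⟨[Sum.inr ⟨s, hs⟩], Or.inr ⟨_, rfl⟩, rfl⟩

end Extension

section Blocks

variable {A M : Type} [Monoid M] (π : A → M) (U : Subsemigroup M)

def IsGreedyBlock (g : List A) : Prop :=
  monProd π g ∈ U ∧ ∀ j < g.length, monProd π (g.take j) ∉ U

def IsFinalBlock (b : List A) : Prop :=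
  monProd π b ∈ U ∧ ∀ g y, IsGreedyBlock π U g → b = g ++ y → monProd π y ∉ U

def blockDecomps : Language (List A) :=
  Language.lastLetterLang (IsGreedyBlock π U) (IsFinalBlock π U)

variable {π U}

theorem IsGreedyBlock.ne_nil (h1 : (1 : M) ∉ U) {g : List A} (hg : IsGreedyBlock π U g) :
    g ≠ [] := by
  rintro rfl
  exact h1 hg.1

theorem IsGreedyBlock.eq_of_prefix {g g' : List A} (hg : IsGreedyBlock π U g)
    (hg' : IsGreedyBlock π U g') (h : g <+: g') : g = g' := by
  refine h.eq_of_length (le_antisymm h.length_le (not_lt.1 fun hlt => hg'.2 _ hlt ?_))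
  rw [← List.prefix_iff_eq_take.1 h]
  exact hg.1

theorem IsGreedyBlock.eq_of_append_eq {g g' y y' : List A} (hg : IsGreedyBlock π U g)
    (hg' : IsGreedyBlock π U g') (h : g ++ y = g' ++ y') : g = g' := by
  rcases List.prefix_or_prefix_of_prefix (List.prefix_append g y) (h ▸ List.prefix_append g' y')
    with h | h
  exacts [hg.eq_of_prefix hg' h, (hg'.eq_of_prefix hg h).symm]

theorem exists_isGreedyBlock_append {u : List A} (hu : monProd π u ∈ U) :
    ∃ g y, IsGreedyBlock π U g ∧ u = g ++ y := by
  classical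
  have hex : ∃ j, monProd π (u.take j) ∈ U := ⟨u.length, by rwa [List.take_length]⟩
  refine ⟨u.take (Nat.find hex), u.drop (Nat.find hex), ⟨Nat.find_spec hex, fun j hj => ?_⟩,
    (List.take_append_drop _ _).symm⟩
  have hj' : j < Nat.find hex := hj.trans_le (List.length_take_le _ _)
  rw [List.take_take, min_eq_left hj'.le]
  exact Nat.find_min hex hj'

theorem IsGreedyBlock.isFinalBlock (h1 : (1 : M) ∉ U) {g : List A}
    (hg : IsGreedyBlock π U g) : IsFinalBlock π U g := by
  refine ⟨hg.1, fun g' y hg' h => ?_⟩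
  obtain rfl := hg.eq_of_append_eq hg' (y := []) (by simpa using h)
  obtain rfl : y = [] := by simpa using h
  exact h1

theorem monProd_mem_of_mem_blockDecomps {vs : List (List A)} (hvs : vs ∈ blockDecomps π U) :
    ∀ b ∈ vs, monProd π b ∈ U := by
  obtain ⟨gs, b, rfl, hgs, hb⟩ := hvs
  intro x hx
  rcases List.mem_append.1 hx with hx | hx
  exacts [(hgs x hx).1, List.eq_of_mem_singleton hx ▸ hb.1]

theorem monProd_flatten_mem {vs : List (List A)} (hvs : vs ∈ blockDecomps π U) :
    monProd π vs.flatten ∈ U := by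
  have hmem := monProd_mem_of_mem_blockDecomps hvs
  have hne : vs ≠ [] := by
    rintro rfl
    exact Language.nil_notMem_lastLetterLang hvs
  obtain ⟨b, vs, rfl⟩ := List.exists_cons_of_ne_nil hne
  clear hvs hne
  induction vs generalizing b with
  | nil => simpa using hmem b (by simp)
  | cons c vs ih =>
    rw [List.flatten_cons, monProd_append]
    exact U.mul_mem (hmem b (by simp)) (ih c fun x hx => hmem x (List.mem_cons_of_mem b hx))

theorem exists_mem_blockDecomps (h1 : (1 : M) ∉ U) {u : List A} (hu : monProd π u ∈ U) :
    ∃ vs ∈ blockDecomps π U, vs.flatten = u := by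
  obtain ⟨g, y, hg, rfl⟩ := exists_isGreedyBlock_append hu
  by_cases hy : monProd π y ∈ U
  · have : y.length < (g ++ y).length := by
      simpa using List.length_pos_iff.2 (hg.ne_nil h1)
    obtain ⟨vs, hvs, rfl⟩ := exists_mem_blockDecomps h1 hy
    exact ⟨g :: vs, Language.cons_mem_lastLetterLang.2 (Or.inr ⟨hg, hvs⟩), rfl⟩
  · refine ⟨[g ++ y], Language.cons_mem_lastLetterLang.2 (Or.inl ⟨rfl, hu, ?_⟩), by simp⟩
    intro g' y' hg' h
    obtain rfl := hg.eq_of_append_eq hg' h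
    rwa [← List.append_cancel_left h]
termination_by u.length

theorem blockDecomps_injOn_flatten :
    Set.InjOn List.flatten (blockDecomps π U) := by
  intro vs hvs vs' hvs' h
  induction vs generalizing vs' with
  | nil => exact absurd hvs Language.nil_notMem_lastLetterLang
  | cons b vs ih =>
    cases vs' with
    | nil => exact absurd hvs' Language.nil_notMem_lastLetterLang
    | cons b' vs' =>
      rw [List.flatten_cons, List.flatten_cons] at h
      rcases Language.cons_mem_lastLetterLang.1 hvs with ⟨rfl, hb⟩ | ⟨hg, hrest⟩ <;>
        rcases Language.cons_mem_lastLetterLang.1 hvs' with ⟨rfl, hb'⟩ | ⟨hg', hrest'⟩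
      · simpa using h
      · exact absurd (monProd_flatten_mem hrest') (hb.2 b' _ hg' (by simpa using h))
      · exact absurd (monProd_flatten_mem hrest) (hb'.2 b _ hg (by simpa using h.symm))
      · obtain rfl := hg.eq_of_append_eq hg' h
        rw [ih hrest hrest' (List.append_cancel_left h)]

end Blocks

section Lengths

variable {A M σ : Type} [Monoid M] {π : A → M} {U : Subsemigroup M} {C : Finset M}

def HasDistinctPrefixValues (π : A → M) (w : List A) : Prop :=
  Set.InjOn (fun i => monProd π (w.take i)) (Set.Iic w.length)

theorem HasDistinctPrefixValues.of_infix {x w : List A} (hw : HasDistinctPrefixValues π w)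
    (h : x <:+: w) : HasDistinctPrefixValues π x := by
  obtain ⟨s, t, rfl⟩ := h
  have key : ∀ k ≤ x.length, (s ++ x ++ t).take (s.length + k) = s ++ x.take k := by
    intro k hk
    rw [List.append_assoc, List.take_length_add_append, List.take_append_of_le_length hk]
  intro i (hi : i ≤ _) j (hj : j ≤ _) hij
  have hlen : ∀ k ≤ x.length, s.length + k ∈ Set.Iic (s ++ x ++ t).length := fun k hk => by
    simp only [Set.mem_Iic, List.length_append]
    omega
  have := hw (hlen i hi) (hlen j hj)
    (by simp only [key i hi, key j hj, monProd_append]; exact congrArg _ hij)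
  omega

theorem HasDistinctPrefixValues.card_le {x : List A} (hx : HasDistinctPrefixValues π x)
    (hC : ∀ m ∉ U, m ∈ C) {J : Finset ℕ}
    (hJ : ∀ j ∈ J, j ≤ x.length ∧ monProd π (x.take j) ∉ U) : J.card ≤ C.card :=
  Finset.card_le_card_of_injOn _ (fun j hj => hC _ (hJ j hj).2) (hx.mono fun j hj => (hJ j hj).1)

theorem IsGreedyBlock.length_le {g : List A} (hg : IsGreedyBlock π U g)
    (hd : HasDistinctPrefixValues π g) (hC : ∀ m ∉ U, m ∈ C) : g.length ≤ C.card := by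
  simpa using hd.card_le hC (J := Finset.range g.length) fun j hj =>
    ⟨(Finset.mem_range.1 hj).le, hg.2 j (Finset.mem_range.1 hj)⟩

/-- Equal pairs at `i` and `j` would let us cut `y.take j` down to `y.take i` inside an accepted
word without changing its value. -/
theorem injOn_eval_monProd_drop (D : DFA A σ) (hinj : Set.InjOn (monProd π) D.accepts)
    {p y : List A} (hw : p ++ y ∈ D.accepts) :
    Set.InjOn (fun j => (D.eval (p ++ y.take j), monProd π (y.drop j))) (Set.Iic y.length) := by
  intro i (hi : i ≤ _) j (hj : j ≤ _) hij
  simp only [Prod.mk.injEq] at hij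
  have hcut : p ++ y.take i ++ y.drop j ∈ D.accepts := by
    change D.eval _ ∈ D.accept
    rw [DFA.eval, DFA.evalFrom_of_append, ← DFA.eval, hij.1, DFA.eval, ← DFA.evalFrom_of_append,
      List.append_assoc, List.take_append_drop]
    exact hw
  have hval : monProd π (p ++ y.take i ++ y.drop j) = monProd π (p ++ y) := by
    rw [monProd_append, ← hij.2, ← monProd_append, List.append_assoc, List.take_append_drop]
  have := congrArg List.length (hinj hcut hw hval)
  simp only [List.length_append, List.length_take, List.length_drop] at this
  omega

/-- At each cut point `j`, `y.take j` or `y.drop j` has value outside `U`, since their product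
`y` does; the former are counted by distinct prefix values, the latter by
`injOn_eval_monProd_drop`. -/
theorem length_add_one_le_of_monProd_notMem [Fintype σ] (D : DFA A σ)
    (hinj : Set.InjOn (monProd π) D.accepts) (hC : ∀ m ∉ U, m ∈ C) {p y : List A}
    (hw : p ++ y ∈ D.accepts) (hd : HasDistinctPrefixValues π (p ++ y))
    (hy : monProd π y ∉ U) : y.length + 1 ≤ Fintype.card σ * C.card + C.card := by
  classical
  set J₁ := (Finset.range (y.length + 1)).filter fun j => monProd π (y.take j) ∉ U
  set J₂ := (Finset.range (y.length + 1)).filter fun j => monProd π (y.drop j) ∉ U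
  have hcover : Finset.range (y.length + 1) ⊆ J₁ ∪ J₂ := by
    intro j hj
    simp only [J₁, J₂, Finset.mem_union, Finset.mem_filter, hj, true_and, ← not_and_or]
    intro h
    exact hy (by rw [← List.take_append_drop j y, monProd_append]; exact U.mul_mem h.1 h.2)
  have h₁ : J₁.card ≤ C.card :=
    (hd.of_infix (List.suffix_append p y).isInfix).card_le hC fun j hj => by
      simp only [J₁, Finset.mem_filter, Finset.mem_range] at hj
      exact ⟨by omega, hj.2⟩
  have h₂ : J₂.card ≤ Fintype.card σ * C.card := by
    rw [← Finset.card_univ, ← Finset.card_product]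
    refine Finset.card_le_card_of_injOn _ (fun j hj => ?_)
      ((injOn_eval_monProd_drop D hinj hw).mono fun j hj => ?_) <;>
      simp only [J₂, Finset.coe_filter, Finset.mem_range, Set.mem_ofPred_eq] at hj
    · exact Finset.mem_product.2 ⟨Finset.mem_univ _, hC _ hj.2⟩
    · exact Nat.le_of_lt_succ hj.1
  calc y.length + 1 = (Finset.range (y.length + 1)).card := by simp
    _ ≤ (J₁ ∪ J₂).card := Finset.card_le_card hcover
    _ ≤ J₁.card + J₂.card := Finset.card_union_le _ _
    _ ≤ Fintype.card σ * C.card + C.card := by omega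

theorem IsFinalBlock.length_le [Fintype σ] (D : DFA A σ) (hinj : Set.InjOn (monProd π) D.accepts)
    (hC : ∀ m ∉ U, m ∈ C) {p b : List A} (hb : IsFinalBlock π U b) (hw : p ++ b ∈ D.accepts)
    (hd : HasDistinctPrefixValues π (p ++ b)) :
    b.length ≤ Fintype.card σ * C.card + 2 * C.card := by
  obtain ⟨g, y, hg, rfl⟩ := exists_isGreedyBlock_append hb.1
  have hg_le := hg.length_le (hd.of_infix ⟨p, y, List.append_assoc _ _ _⟩) hC
  have hy_le := length_add_one_le_of_monProd_notMem D hinj hC (p := p ++ g)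
    (by simpa using hw) (by simpa using hd) (hb.2 g y hg rfl)
  simp only [List.length_append]
  omega

theorem length_le_of_mem_blockDecomps [Fintype σ] (D : DFA A σ)
    (hinj : Set.InjOn (monProd π) D.accepts)
    (hd : ∀ w ∈ D.accepts, HasDistinctPrefixValues π w) (hC : ∀ m ∉ U, m ∈ C)
    {vs : List (List A)} (hvs : vs ∈ blockDecomps π U) {p : List A}
    (hw : p ++ vs.flatten ∈ D.accepts) :
    ∀ b ∈ vs, b.length ≤ Fintype.card σ * C.card + 2 * C.card := by
  induction vs generalizing p with
  | nil => simp
  | cons b vs ih =>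
    rw [List.flatten_cons] at hw
    intro b' hb'
    rcases Language.cons_mem_lastLetterLang.1 hvs with ⟨rfl, hb⟩ | ⟨hg, hrest⟩
    · obtain rfl := List.mem_singleton.1 hb'
      exact hb.length_le D hinj hC (by simpa using hw) (hd _ (by simpa using hw))
    · rcases List.mem_cons.1 hb' with rfl | hb'
      · have := hg.length_le ((hd _ hw).of_infix ⟨p, vs.flatten, List.append_assoc _ _ _⟩) hC
        omega
      · exact ih hrest (p := p ++ b) (by simpa using hw) b' hb'

end Lengths

section BlockLanguage

variable {A M σ : Type} [Monoid M] (π : A → M) (U : Subsemigroup M)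

def blockLang (L : Language A) : Language (List A) :=
  {vs | vs.flatten ∈ L ∧ vs ∈ blockDecomps π U}

variable {π U} {L : Language A}

theorem isRegular_blockLang (hL : L.IsRegular) : (blockLang π U L).IsRegular :=
  hL.preimage_flatten.inf (Language.isRegular_lastLetterLang _ _)

theorem nil_notMem_blockLang : [] ∉ blockLang π U L :=
  fun h => Language.nil_notMem_lastLetterLang h.2

theorem mem_blockLang_of_append (h1 : (1 : M) ∉ U)
    (hL : ∀ u v : List A, u ≠ [] → v ≠ [] → u ++ v ∈ L → u ∈ L) {us vs : List (List A)}
    (hus : us ≠ []) (hvs : vs ≠ []) (h : us ++ vs ∈ blockLang π U L) : us ∈ blockLang π U L := by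
  have hne : ∀ ws : List (List A), ws ≠ [] → (∀ b ∈ ws, b ∈ us ++ vs) → ws.flatten ≠ [] := by
    intro ws hws hsub hflat
    obtain ⟨b, hb⟩ := List.exists_mem_of_ne_nil ws hws
    have hbU := monProd_mem_of_mem_blockDecomps h.2 b (hsub b hb)
    rw [List.flatten_eq_nil_iff.1 hflat b hb] at hbU
    exact h1 hbU
  refine ⟨hL _ _ (hne us hus fun b hb => List.mem_append_left _ hb)
      (hne vs hvs fun b hb => List.mem_append_right _ hb) (List.flatten_append ▸ h.1),
    Language.mem_lastLetterLang_of_append (fun _ hg => hg.isFinalBlock h1) h.2 hus⟩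

theorem blockLang_injOn (hinj : Set.InjOn (monProd π) L) :
    Set.InjOn (fun vs => monProd π vs.flatten) (blockLang π U L) :=
  fun _ hvs _ hvs' h => blockDecomps_injOn_flatten hvs.2 hvs'.2 (hinj hvs.1 hvs'.1 h)

theorem exists_mem_blockLang [Fintype σ] (h1 : (1 : M) ∉ U) {C : Finset M}
    (hC : ∀ m ∉ U, m ∈ C) (D : DFA A σ) (hD : D.accepts = L)
    (hinj : Set.InjOn (monProd π) L) (hd : ∀ w ∈ L, HasDistinctPrefixValues π w)
    {w : List A} (hw : w ∈ L) (hwU : monProd π w ∈ U) :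
    ∃ vs ∈ blockLang π U L, vs.flatten = w ∧
      ∀ b ∈ vs, b.length ≤ Fintype.card σ * C.card + 2 * C.card := by
  subst hD
  obtain ⟨vs, hvs, rfl⟩ := exists_mem_blockDecomps h1 hwU
  exact ⟨vs, ⟨hw, hvs⟩, rfl, length_le_of_mem_blockDecomps D hinj hd hC hvs (p := []) hw⟩

end BlockLanguage

section MarkovLanguage

variable {A S : Type} [Semigroup S] {φ : A → S} {L : Language A}

theorem monProd_coe_eq_one_iff {u : List A} :
    monProd (fun a => (φ a : WithOne S)) u = 1 ↔ u = [] := by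
  rw [← prodPlus_eq_monProd]
  exact prodPlus_eq_none_iff

theorem IsSgMarkovLang.injOn_monProd (hL : IsSgMarkovLang φ L) :
    Set.InjOn (monProd fun a => (φ a : WithOne S)) L := fun u hu v hv h =>
  hL.injOn hu hv (by rw [prodPlus_eq_monProd, prodPlus_eq_monProd]; exact h)

theorem IsSgMarkovLang.hasDistinctPrefixValues (hL : IsSgMarkovLang φ L) {w : List A}
    (hw : w ∈ L) : HasDistinctPrefixValues (fun a => (φ a : WithOne S)) w := by
  have hw0 : w ≠ [] := fun h => hL.not_empty_mem (h ▸ hw)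
  have hmem : ∀ k, 0 < k → k ≤ w.length → w.take k ∈ L := by
    intro k hk0 hk
    rcases hk.lt_or_eq with hk | rfl
    · exact hL.plus_prefix_closed _ (w.drop k)
        (by simp only [ne_eq, List.take_eq_nil_iff, hw0, or_false]; omega)
        (by simp only [ne_eq, List.drop_eq_nil_iff, not_le]; omega)
        (by rwa [List.take_append_drop])
    · rwa [List.take_length]
  have hzero : ∀ k, monProd (fun a => (φ a : WithOne S)) (w.take k) = 1 → k = 0 := by
    intro k h
    simpa [hw0] using monProd_coe_eq_one_iff.1 h
  intro i (hi : i ≤ _) j (hj : j ≤ _) hij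
  rcases Nat.eq_zero_or_pos i with rfl | hi0 <;> rcases Nat.eq_zero_or_pos j with rfl | hj0
  · rfl
  · exact (hzero j hij.symm).symm
  · exact hzero i hij
  · have := congrArg List.length (hL.injOn_monProd (hmem i hi0 hi) (hmem j hj0 hj) hij)
    simp only [List.length_take] at this
    omega

end MarkovLanguage

theorem Subsemigroup.one_notMem_map_coeMulHom {S : Type} [Semigroup S] (T : Subsemigroup S) :
    (1 : WithOne S) ∉ T.map WithOne.coeMulHom := by
  simp

theorem Subsemigroup.finite_compl_map_coeMulHom {S : Type} [Semigroup S] {T : Subsemigroup S}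
    (hfin : ((T : Set S)ᶜ).Finite) :
    ((T.map WithOne.coeMulHom : Set (WithOne S))ᶜ).Finite := by
  refine ((hfin.image (↑)).insert 1).subset fun m hm => ?_
  induction m using WithOne.recOneCoe with
  | one => exact Set.mem_insert _ _
  | coe s => simp_all

theorem SgMarkov.of_blockLanguage {S A : Type} [Semigroup S] [Finite A] (T : Subsemigroup S)
    (π : A → WithOne S) (K : Language (List A)) (n : ℕ) (hreg : K.IsRegular) (hnil : [] ∉ K)
    (hpre : ∀ us vs : List (List A), us ≠ [] → vs ≠ [] → us ++ vs ∈ K → us ∈ K)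
    (hinj : Set.InjOn (fun vs => monProd π vs.flatten) K)
    (hsurj : ∀ t ∈ T, ∃ vs ∈ K, monProd π vs.flatten = t ∧
      ∀ b ∈ vs, b.length ≤ n ∧ monProd π b ∈ T.map WithOne.coeMulHom) :
    SgMarkov T := by
  let B := {b : List A | b.length ≤ n ∧ monProd π b ∈ T.map WithOne.coeMulHom}
  have : Fintype B := ((List.finite_length_le A n).subset fun b hb => hb.1).fintype
  have hψ : ∀ b : B, ∃ t : T, ((t : S) : WithOne S) = monProd π b.1 := fun b => by
    obtain ⟨t, ht, e⟩ := Subsemigroup.mem_map.1 b.2.2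
    exact ⟨⟨t, ht⟩, e⟩
  choose ψ hψ using hψ
  have hval : ∀ v : List B,
      monProd π (v.map Subtype.val).flatten = (prodPlus ψ v).map Subtype.val := by
    intro v
    refine Eq.trans ?_ (prodPlus_comp (MulMemClass.subtype T) ψ v)
    rw [prodPlus_eq_monProd, monProd_flatten, monProd, monProd, List.map_map]
    exact congrArg List.prod (List.map_congr_left fun b _ => (hψ b).symm)
  refine (IsSgMarkovLang.of_injOn (φ := ψ) (L := List.map Subtype.val ⁻¹' K)
    (hreg.preimage_map _) hnil (fun u v hu hv h => ?_) (fun v hv v' hv' h => ?_)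
    (fun t => ?_)).sgMarkov
  · change (u ++ v).map Subtype.val ∈ K at h
    rw [List.map_append] at h
    exact hpre _ _ (fun h => hu (List.map_eq_nil_iff.1 h)) (fun h => hv (List.map_eq_nil_iff.1 h)) h
  · refine List.map_injective_iff.2 Subtype.val_injective (hinj hv hv' ?_)
    exact (hval v).trans ((congrArg _ h).trans (hval v').symm)
  · obtain ⟨vs, hvs, hvst, hblocks⟩ := hsurj t t.2
    lift vs to List B using hblocks
    exact ⟨vs, hvs, Option.map_injective Subtype.val_injective (by rw [← hval, hvst]; rfl)⟩

theorem SgMarkov.subsemigroup_of_finite_compl {S : Type} [Semigroup S] (T : Subsemigroup S)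
    (hfin : ((T : Set S)ᶜ).Finite) (h : SgMarkov S) : SgMarkov T := by
  obtain ⟨A, _, φ, -, L, hL⟩ := h
  obtain ⟨σ, _, D, hD⟩ := hL.regular
  let π : A → WithOne S := fun a => φ a
  have h1 := T.one_notMem_map_coeMulHom
  have hUfin := Subsemigroup.finite_compl_map_coeMulHom hfin
  set C := hUfin.toFinset
  have hC : ∀ m ∉ T.map WithOne.coeMulHom, m ∈ C := fun m hm => hUfin.mem_toFinset.2 hm
  refine SgMarkov.of_blockLanguage T π _ (Fintype.card σ * C.card + 2 * C.card)
    (isRegular_blockLang hL.regular) nil_notMem_blockLang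
    (fun _ _ => mem_blockLang_of_append h1 hL.plus_prefix_closed)
    (blockLang_injOn hL.injOn_monProd) fun t ht => ?_
  obtain ⟨w, ⟨hw, hwt⟩, -⟩ := hL.unique_rep t
  have hwt' : monProd π w = t := by
    rw [← prodPlus_eq_monProd, hwt]
    rfl
  obtain ⟨vs, hvs, rfl, hlen⟩ := exists_mem_blockLang h1 hC D hD hL.injOn_monProd
    (fun w hw => hL.hasDistinctPrefixValues hw) hw (hwt' ▸ Subsemigroup.mem_map_of_mem _ ht)
  exact ⟨vs, hvs, hwt', fun b hb => ⟨hlen b hb, monProd_mem_of_mem_blockDecomps hvs.2 b hb⟩⟩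


/-- A subsemigroup of finite Rees index (finite complement) is Markov iff the ambient
semigroup is Markov. -/
theorem stmt19 {S : Type} [Semigroup S] (T : Subsemigroup S)
    (hfin : ((T : Set S)ᶜ).Finite) :
    SgMarkov T ↔ SgMarkov S :=
  ⟨SgMarkov.of_subsemigroup_of_finite_compl T hfin, SgMarkov.subsemigroup_of_finite_compl T hfin⟩
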